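/- Let 1 ≤ p ≤ ∞ and let f ∈ L^p([0,1]) with ∫₀¹ f(u) du = 0. Then for any integers n ≥ 0 and m ≥ 1, ‖𝔼(f(m·) | ℱ_n)‖_p ≤ (2^n/m) ‖f‖_p, where f(m·) denotes the function x ↦ f(mx) on [0,1] (f being extended 1-periodically). -/

import Mathlib

open MeasureTheory Filter ENNReal

/-- `ℱ_n`: the σ-algebra generated by the dyadic intervals of generation `n` in `[0,1]`. -/
def dyadicSigma (n : ℕ) : MeasurableSpace ℝ :=
  MeasurableSpace.generateFrom
    {s : Set ℝ | ∃ k : ℕ, k < 2 ^ n ∧ s = Set.Ioc ((k : ℝ) / 2 ^ n) (((k : ℝ) + 1) / 2 ^ n)}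

open Set MeasurableSpace Function

/-!
On a dyadic interval `I` of generation `n`, the conditional expectation of `f(m·)` is the average
`2ⁿ ∫_I f(mx) dx = (2ⁿ/m) ∫_J f`, where `J = mI` has length `m/2ⁿ`. As `f` is 1-periodic with mean
zero, the whole periods contained in `J` contribute nothing, so this average is at most
`(2ⁿ/m) ‖f‖₁ ≤ (2ⁿ/m) ‖f‖_p` in absolute value; a function bounded by `C` on a probability space
has `L^p` norm at most `C`.
-/

section FinitePartition

variable {α ι E : Type*} [NormedAddCommGroup E] [NormedSpace ℝ E]
  {s : Finset ι} {A : ι → Set α}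

theorem Set.PairwiseDisjoint.sum_indicator_apply_of_mem {M : Type*} [AddCommMonoid M]
    (hdisj : (s : Set ι).PairwiseDisjoint A) (c : ι → M) {i : ι} (hi : i ∈ s) {x : α}
    (hx : x ∈ A i) : ∑ j ∈ s, (A j).indicator (fun _ => c j) x = c i := by
  rw [Finset.sum_eq_single_of_mem i hi fun j hj hji =>
    indicator_of_notMem (fun hxj => disjoint_left.1 (hdisj hj hi hji) hxj hx) _]
  exact indicator_of_mem hx _

variable [CompleteSpace E] {m₀ : MeasurableSpace α} {μ : Measure α} [IsFiniteMeasure μ]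

/-- On a null atom the coefficient is the junk value `0⁻¹ = 0`, which is harmless a.e. -/
theorem condExp_generateFrom_ae_eq_sum_indicator (hA : ∀ i ∈ s, MeasurableSet (A i))
    (hdisj : (s : Set ι).PairwiseDisjoint A) (hcover : ∀ᵐ x ∂μ, x ∈ ⋃ i ∈ s, A i)
    {g : α → E} (hg : Integrable g μ) :
    μ[g | generateFrom (A '' s)] =ᵐ[μ]
      fun x => ∑ i ∈ s, (A i).indicator (fun _ => (μ.real (A i))⁻¹ • ∫ y in A i, g y ∂μ) x := by
  set h : α → E :=
    fun x => ∑ i ∈ s, (A i).indicator (fun _ => (μ.real (A i))⁻¹ • ∫ y in A i, g y ∂μ) x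
  have hle : generateFrom (A '' s) ≤ m₀ :=
    generateFrom_le (by rintro _ ⟨i, hi, rfl⟩; exact hA i hi)
  have h_sm : StronglyMeasurable[generateFrom (A '' s)] h :=
    Finset.stronglyMeasurable_fun_sum _ fun i hi =>
      stronglyMeasurable_const.indicator (measurableSet_generateFrom ⟨i, hi, rfl⟩)
  have h_int : Integrable h μ :=
    integrable_finsetSum _ fun i hi => (integrable_const _).indicator (hA i hi)
  have h_atom : ∀ i ∈ s, ∫ x in A i, h x ∂μ = ∫ x in A i, g x ∂μ := by
    intro i hi
    rw [setIntegral_congr_fun (hA i hi) fun x hx => hdisj.sum_indicator_apply_of_mem _ hi hx,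
      setIntegral_const, smul_smul]
    rcases eq_or_ne (μ.real (A i)) 0 with h0 | h0
    · rw [h0, zero_mul, zero_smul, setIntegral_measure_zero _ ((measureReal_eq_zero_iff).1 h0)]
    · rw [mul_inv_cancel₀ h0, one_smul]
  have h_univ : ∫ x, h x ∂μ = ∫ x, g x ∂μ := by
    have hU : (⋃ i ∈ s, A i) =ᵐ[μ] (univ : Set α) := eventuallyEq_univ.2 hcover
    rw [← setIntegral_univ, ← setIntegral_univ (f := g), ← setIntegral_congr_set hU,
      ← setIntegral_congr_set hU, integral_biUnion_finset _ hA hdisj fun _ _ => h_int.integrableOn,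
      integral_biUnion_finset _ hA hdisj fun _ _ => hg.integrableOn]
    exact Finset.sum_congr rfl h_atom
  have hpi : IsPiSystem (A '' s) := by
    rintro _ ⟨i, hi, rfl⟩ _ ⟨j, hj, rfl⟩ hij
    obtain rfl : i = j := by
      by_contra hne
      exact hij.ne_empty (disjoint_iff_inter_eq_empty.1 (hdisj hi hj hne))
    rw [inter_self]
    exact ⟨i, hi, rfl⟩
  have h_eq : ∀ t, MeasurableSet[generateFrom (A '' s)] t →
      ∫ x in t, h x ∂μ = ∫ x in t, g x ∂μ := by
    refine induction_on_inter rfl hpi (by simp) (by rintro _ ⟨i, hi, rfl⟩; exact h_atom i hi) ?_ ?_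
    · intro t ht hth
      rw [setIntegral_compl (hle t ht) h_int, setIntegral_compl (hle t ht) hg, hth, h_univ]
    · intro t ht_disj ht hth
      rw [integral_iUnion (fun i => hle _ (ht i)) ht_disj h_int.integrableOn,
        integral_iUnion (fun i => hle _ (ht i)) ht_disj hg.integrableOn]
      exact tsum_congr hth
  have : IsFiniteMeasure (μ.trim hle) := isFiniteMeasure_trim hle
  exact (ae_eq_condExp_of_forall_setIntegral_eq hle hg (fun _ _ _ => h_int.integrableOn)
    (fun t ht _ => h_eq t ht) h_sm.aestronglyMeasurable).symm

theorem ae_norm_condExp_generateFrom_le (hA : ∀ i ∈ s, MeasurableSet (A i))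
    (hdisj : (s : Set ι).PairwiseDisjoint A) (hcover : ∀ᵐ x ∂μ, x ∈ ⋃ i ∈ s, A i)
    {g : α → E} (hg : Integrable g μ) {C : ℝ} (hC₀ : 0 ≤ C)
    (hC : ∀ i ∈ s, ‖∫ x in A i, g x ∂μ‖ ≤ C * μ.real (A i)) :
    ∀ᵐ x ∂μ, ‖μ[g | generateFrom (A '' s)] x‖ ≤ C := by
  filter_upwards [condExp_generateFrom_ae_eq_sum_indicator hA hdisj hcover hg, hcover]
    with x hx hxA
  obtain ⟨i, hi, hxi⟩ := mem_iUnion₂.1 hxA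
  rw [hx, hdisj.sum_indicator_apply_of_mem _ hi hxi, norm_smul, norm_inv,
    Real.norm_of_nonneg measureReal_nonneg]
  rcases (measureReal_nonneg (μ := μ) (s := A i)).eq_or_lt with h0 | hpos
  · simpa [← h0] using hC₀
  · rw [inv_mul_le_iff₀ hpos, mul_comm]
    exact hC i hi

end FinitePartition

section Periodic

variable {E : Type*} [NormedAddCommGroup E] [NormedSpace ℝ E] {f : ℝ → E} {T : ℝ}

-- Whole periods contribute nothing, and what is left is an integral over less than a period.
theorem Function.Periodic.norm_intervalIntegral_le (hf : Periodic f T) (hT : 0 < T)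
    (hfi : IntervalIntegrable f volume 0 T) (hmean : ∫ x in 0..T, f x = 0) (a b : ℝ) :
    ‖∫ x in a..b, f x‖ ≤ ∫ x in 0..T, ‖f x‖ := by
  wlog hab : a ≤ b generalizing a b
  · rw [intervalIntegral.integral_symm, norm_neg]
    exact this b a (le_of_not_ge hab)
  have hint := hf.intervalIntegrable₀ hT.ne' hfi
  set c := a + ⌊(b - a) / T⌋ • T
  set ε := Int.fract ((b - a) / T) * T
  have hb : b = c + ε := by
    have := Int.fract_div_mul_self_add_zsmul_eq T (b - a) hT.ne'
    simp only [c, ε]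
    linarith
  obtain ⟨hε₀, hεT⟩ := Int.fract_div_mul_self_mem_Ico T (b - a) hT
  have hperiods : ∫ x in a..c, f x = 0 := by
    rw [hf.intervalIntegral_add_zsmul_eq _ a hint, hf.intervalIntegral_add_eq a 0, zero_add, hmean,
      smul_zero]
  calc ‖∫ x in a..b, f x‖ = ‖∫ x in c..c + ε, f x‖ := by
        rw [← intervalIntegral.integral_add_adjacent_intervals (hint a c) (hint c b), hperiods,
          zero_add, hb]
    _ ≤ ∫ x in c..c + ε, ‖f x‖ := intervalIntegral.norm_integral_le_integral_norm (by linarith)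
    _ ≤ ∫ x in c..c + T, ‖f x‖ :=
        intervalIntegral.integral_mono_interval le_rfl (by linarith) (by linarith)
          (ae_of_all _ fun _ => norm_nonneg _) (hint c (c + T)).norm
    _ = ∫ x in 0..T, ‖f x‖ := by
        simpa using (hf.comp norm).intervalIntegral_add_eq c 0

theorem Function.Periodic.norm_intervalIntegral_comp_mul_le (hf : Periodic f T)
    (hT : 0 < T) (hfi : IntervalIntegrable f volume 0 T) (hmean : ∫ x in 0..T, f x = 0)
    {c : ℝ} (hc : c ≠ 0) (a b : ℝ) :
    ‖∫ x in a..b, f (c * x)‖ ≤ |c|⁻¹ * ∫ x in 0..T, ‖f x‖ := by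
  rw [intervalIntegral.integral_comp_mul_left f hc, norm_smul, norm_inv, Real.norm_eq_abs]
  gcongr
  exact hf.norm_intervalIntegral_le hT hfi hmean _ _

end Periodic

section Dyadic

def dyadicInterval (n k : ℕ) : Set ℝ := Ioc ((k : ℝ) / 2 ^ n) (((k : ℝ) + 1) / 2 ^ n)

theorem dyadicSigma_eq_generateFrom (n : ℕ) :
    dyadicSigma n = generateFrom (dyadicInterval n '' Finset.range (2 ^ n)) := by
  rw [dyadicSigma]
  congr 1
  ext s
  simp [dyadicInterval, eq_comm]

theorem pairwise_disjoint_dyadicInterval (n : ℕ) : Pairwise (Disjoint on dyadicInterval n) := by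
  intro j k hjk
  wlog hlt : j < k generalizing j k
  · exact (this hjk.symm (by omega)).symm
  refine Ioc_disjoint_Ioc_of_le ?_
  gcongr
  exact_mod_cast hlt

theorem dyadicInterval_subset_Ioc {n k : ℕ} (hk : k < 2 ^ n) : dyadicInterval n k ⊆ Ioc 0 1 := by
  refine Ioc_subset_Ioc (by positivity) ?_
  rw [div_le_one (by positivity)]
  exact_mod_cast hk

theorem biUnion_dyadicInterval (n : ℕ) :
    ⋃ k ∈ Finset.range (2 ^ n), dyadicInterval n k = Ioc 0 1 := by
  refine Subset.antisymm (iUnion₂_subset fun k hk => dyadicInterval_subset_Ioc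
    (Finset.mem_range.1 hk)) ?_
  convert Ioc_subset_biUnion_Ioc (2 ^ n) (fun k : ℕ => (k : ℝ) / 2 ^ n) using 1
  · simp
  · simp [dyadicInterval]

theorem volume_real_dyadicInterval (n k : ℕ) : volume.real (dyadicInterval n k) = (2 ^ n)⁻¹ := by
  rw [dyadicInterval, Real.volume_real_Ioc_of_le (by gcongr; linarith)]
  ring

theorem Function.Periodic.norm_setIntegral_dyadicInterval_comp_mul_le
    {E : Type*} [NormedAddCommGroup E] [NormedSpace ℝ E] {f : ℝ → E}
    (hf : Periodic f 1) (hfi : IntervalIntegrable f volume 0 1)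
    (hmean : ∫ x in 0..1, f x = 0) {c : ℝ} (hc : 0 < c) (n k : ℕ) :
    ‖∫ x in dyadicInterval n k, f (c * x)‖ ≤
      (2 ^ n / c * ∫ x in 0..1, ‖f x‖) * volume.real (dyadicInterval n k) := by
  rw [volume_real_dyadicInterval, dyadicInterval,
    ← intervalIntegral.integral_of_le (by gcongr; linarith)]
  calc _ ≤ |c|⁻¹ * ∫ x in 0..1, ‖f x‖ :=
        hf.norm_intervalIntegral_comp_mul_le one_pos hfi hmean hc.ne' _ _
    _ = _ := by
        rw [abs_of_pos hc]
        field_simp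

end Dyadic

/-- **Lemma (contraction for dilations).** For `1 ≤ p ≤ ∞` and `f ∈ L^p([0,1])` 1-periodic
with `∫₀¹ f = 0`, and integers `n ≥ 0`, `m ≥ 1`, one has
`‖𝔼(f(m·) | ℱ_n)‖_p ≤ (2ⁿ/m) ‖f‖_p`. -/
theorem stmt16 (p : ℝ≥0∞) (hp : 1 ≤ p)
    (f : ℝ → ℝ) (hper : Function.Periodic f 1)
    (hf : MemLp f p (MeasureTheory.volume.restrict (Set.Ioc (0 : ℝ) 1)))
    (hmean : ∫ x in Set.Ioc (0 : ℝ) 1, f x = 0)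
    (n : ℕ) (m : ℕ) (hm : 1 ≤ m) :
    eLpNorm
        ((MeasureTheory.volume.restrict (Set.Ioc (0 : ℝ) 1))[(fun x => f ((m : ℝ) * x)) |
          dyadicSigma n]) p
        (MeasureTheory.volume.restrict (Set.Ioc (0 : ℝ) 1)) ≤
      ENNReal.ofReal ((2 : ℝ) ^ n / (m : ℝ)) *
        eLpNorm f p (MeasureTheory.volume.restrict (Set.Ioc (0 : ℝ) 1)) := by
  set μ := volume.restrict (Ioc (0 : ℝ) 1)
  have : IsProbabilityMeasure μ := ⟨by simp [μ]⟩
  have hm₀ : (0 : ℝ) < m := by exact_mod_cast hm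
  have hf₁ : Integrable f μ := hf.integrable hp
  have hfi : IntervalIntegrable f volume 0 1 :=
    (intervalIntegrable_iff_integrableOn_Ioc_of_le zero_le_one).2 hf₁
  have hmean₀₁ : ∫ x in 0..1, f x = 0 := by rwa [intervalIntegral.integral_of_le zero_le_one]
  have hg : IntegrableOn (fun x => f (m * x)) (Ioc 0 1) := by
    simpa [hm₀.ne'] using ((hper.intervalIntegrable₀ one_ne_zero hfi 0 m).comp_mul_left
      (c := (m : ℝ))).1
  have hC₀ : 0 ≤ 2 ^ n / (m : ℝ) * ∫ x in 0..1, ‖f x‖ :=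
    mul_nonneg (by positivity)
      (intervalIntegral.integral_nonneg zero_le_one fun _ _ => norm_nonneg _)
  have hbound : ∀ᵐ x ∂μ, ‖μ[fun x => f (m * x) | dyadicSigma n] x‖ ≤
      2 ^ n / m * ∫ x in 0..1, ‖f x‖ := by
    rw [dyadicSigma_eq_generateFrom]
    refine ae_norm_condExp_generateFrom_le (A := dyadicInterval n) (fun _ _ => measurableSet_Ioc)
      ((pairwise_disjoint_dyadicInterval n).set_pairwise _)
      (by rw [biUnion_dyadicInterval]; exact ae_restrict_mem measurableSet_Ioc) hg hC₀
      fun k hk => ?_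
    have hsub := dyadicInterval_subset_Ioc (Finset.mem_range.1 hk)
    rw [Measure.restrict_restrict_of_subset hsub, measureReal_restrict_apply' measurableSet_Ioc,
      inter_eq_self_of_subset_left hsub]
    exact hper.norm_setIntegral_dyadicInterval_comp_mul_le hfi hmean₀₁ hm₀ n k
  calc eLpNorm _ p μ ≤ ENNReal.ofReal (2 ^ n / m * ∫ x in 0..1, ‖f x‖) := by
        simpa using eLpNorm_le_of_ae_bound (p := p) hbound
    _ = ENNReal.ofReal (2 ^ n / m) * eLpNorm f 1 μ := by
        rw [ENNReal.ofReal_mul (by positivity), intervalIntegral.integral_of_le zero_le_one,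
          ofReal_integral_norm_eq_lintegral_enorm hf₁, eLpNorm_one_eq_lintegral_enorm]
    _ ≤ _ := by
        gcongr
        exact eLpNorm_le_eLpNorm_of_exponent_le hp hf.1
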